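/- arXiv:2210.03744 — 3 statements merged into one kernel-verified Lean document; each statement's English description precedes it below -/
import Mathlib

section
/- The only rational points on the genus-2 curve C : y² = −4x⁶ + 1 are (0, 1) and (0, −1); that is, if x, y ∈ ℚ satisfy y² = −4x⁶ + 1, then x = 0 and y = 1 or y = −1. -/
/-- The only rational points on the genus-2 curve `y² = −4x⁶ + 1`
are `(0, 1)` and `(0, −1)`. -/
theorem rational_points_on_y_sq_eq_neg_four_x_six_add_one
    (x y : ℚ) (h : y ^ 2 = -4 * x ^ 6 + 1) :
    x = 0 ∧ (y = 1 ∨ y = -1) := by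
  have hx0 : x = 0 := by
    rcases eq_or_ne y (-1) with hy | hy
    · rw [hy] at h
      have : x ^ 6 = 0 := by nlinarith
      exact pow_eq_zero_iff (by norm_num) |>.mp this
    have hy1 : 1 + y ≠ 0 := fun hc => hy (by linarith)
    set t : ℚ := 2 * x ^ 3 / (1 + y) with ht
    have ht2 : t * (1 + y) = 2 * x ^ 3 := by
      rw [ht, div_mul_cancel₀ _ hy1]
    have key : x ^ 3 * (1 + t ^ 2) = t := by
      have e0 : (x ^ 3 * (1 + t ^ 2) - t) * (1 + y) ^ 2 = 0 := by
        linear_combination (x ^ 3 * (t * (1 + y) + 2 * x ^ 3) - (1 + y)) * ht2 + x ^ 3 * h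
      have h2 : (1 + y) ^ 2 ≠ 0 := pow_ne_zero _ hy1
      have := (mul_eq_zero.mp e0).resolve_right h2
      linarith
    set m : ℤ := t.num with hm
    set n : ℤ := (t.den : ℤ) with hn
    set p : ℤ := x.num with hp
    set q : ℤ := (x.den : ℤ) with hq
    have hnq0 : (0:ℤ) < n := by rw [hn]; exact_mod_cast t.pos
    have hq0 : (0:ℤ) < q := by rw [hq]; exact_mod_cast x.pos
    have hdent : ((t.den : ℤ) : ℚ) ≠ 0 := by
      push_cast; exact_mod_cast t.den_nz
    have hdenx : ((x.den : ℤ) : ℚ) ≠ 0 := by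
      push_cast; exact_mod_cast x.den_nz
    have em : (m : ℚ) = t * n := by
      rw [hm, hn]
      push_cast
      exact ((eq_div_iff (by exact_mod_cast t.den_nz)).mp (Rat.num_div_den t).symm).symm
    have ep : (p : ℚ) = x * q := by
      rw [hp, hq]
      push_cast
      exact ((eq_div_iff (by exact_mod_cast x.den_nz)).mp (Rat.num_div_den x).symm).symm
    -- main integer identity
    have idQ : (p : ℚ) ^ 3 * ((m:ℚ) ^ 2 + (n:ℚ) ^ 2) = (m:ℚ) * n * q ^ 3 := by
      rw [em, ep]
      linear_combination ((q:ℚ) ^ 3 * (n:ℚ) ^ 2) * key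
    have idZ : p ^ 3 * (m ^ 2 + n ^ 2) = m * n * q ^ 3 := by exact_mod_cast idQ
    have cop_mn : IsCoprime m n := by
      rw [Int.isCoprime_iff_gcd_eq_one]
      simpa [hm, hn, Int.gcd] using t.reduced
    have cop_pq : IsCoprime p q := by
      rw [Int.isCoprime_iff_gcd_eq_one]
      simpa [hp, hq, Int.gcd] using x.reduced
    have h1 : IsCoprime m (m ^ 2 + n ^ 2) := by
      have := (cop_mn.pow_right (n := 2)).add_mul_left_right m
      convert this using 1
      · rfl
      ring
    have h2 : IsCoprime n (m ^ 2 + n ^ 2) := by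
      have := (cop_mn.symm.pow_right (n := 2)).add_mul_left_right n
      convert this using 1
      · rfl
      ring
    have cop : IsCoprime (m ^ 2 + n ^ 2) (m * n) := (h1.mul_left h2).symm
    have d1 : (m ^ 2 + n ^ 2) ∣ q ^ 3 :=
      cop.dvd_of_dvd_mul_left ⟨p ^ 3, by linear_combination -idZ⟩
    have d2 : q ^ 3 ∣ (m ^ 2 + n ^ 2) := by
      have cq : IsCoprime (q ^ 3) (p ^ 3) := cop_pq.symm.pow
      exact cq.dvd_of_dvd_mul_left ⟨m * n, by linear_combination idZ⟩
    have heq : m ^ 2 + n ^ 2 = q ^ 3 :=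
      Int.dvd_antisymm (by positivity) (by positivity) d1 d2
    have hpmn : m * n = p ^ 3 := by
      have hq3 : (q : ℤ) ^ 3 ≠ 0 := by positivity
      have h5 : p ^ 3 * q ^ 3 = m * n * q ^ 3 := by
        linear_combination idZ - p ^ 3 * heq
      exact (mul_right_cancel₀ hq3 h5).symm
    obtain ⟨⟨a, ha⟩, ⟨b, hb⟩⟩ :=
      Int.eq_pow_of_mul_eq_pow_odd cop_mn (by decide : Odd 3) hpmn
    have hm0 : m = 0 := by
      by_contra hm0
      have ha0 : a ≠ 0 := fun hc => hm0 (by simp [ha, hc])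
      have hb0 : b ≠ 0 := by
        intro hc
        rw [hc] at hb
        simp at hb
        exact hnq0.ne' hb
      have hqz : q ≠ 0 := hq0.ne'
      have flt := fermatLastTheoremFor_iff_int.mp fermatLastTheoremThree
      refine flt (a ^ 2) (b ^ 2) q (pow_ne_zero 2 ha0) (pow_ne_zero 2 hb0) hqz ?_
      have e6 : (a ^ 2) ^ 3 + (b ^ 2) ^ 3 = m ^ 2 + n ^ 2 := by rw [ha, hb]; ring
      rw [e6, heq]
    have ht0 : t = 0 := Rat.num_eq_zero.mp hm0
    have : x ^ 3 = 0 := by rw [ht0] at key; simpa using key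
    exact pow_eq_zero_iff (by norm_num) |>.mp this
  refine ⟨hx0, ?_⟩
  rw [hx0] at h
  have : (y - 1) * (y + 1) = 0 := by ring_nf; linarith
  rcases mul_eq_zero.mp this with h1 | h1
  · left; linarith
  · right; linarith
end

section
/- For d = 3 and for d = 6, the curve C_d : y² = −4x⁶ + d³ has no rational points; that is, there are no x, y ∈ ℚ with y² = −4x⁶ + 27, and there are no x, y ∈ ℚ with y² = −4x⁶ + 216. -/
set_option maxRecDepth 1000000 in
set_option maxHeartbeats 2000000 in
private lemma zmod_27 : ∀ u v w : ZMod 32, w ^ 2 = (27 : ZMod 32) * v ^ 6 - 4 * u ^ 6 →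
      (ZMod.castHom (by norm_num : (2:ℕ) ∣ 32) (ZMod 2)) u = 0 ∧
      (ZMod.castHom (by norm_num : (2:ℕ) ∣ 32) (ZMod 2)) v = 0 := by decide

set_option maxRecDepth 1000000 in
set_option maxHeartbeats 2000000 in
private lemma zmod_216 : ∀ u v w : ZMod 32, w ^ 2 = (216 : ZMod 32) * v ^ 6 - 4 * u ^ 6 →
      (ZMod.castHom (by norm_num : (2:ℕ) ∣ 32) (ZMod 2)) u = 0 ∧
      (ZMod.castHom (by norm_num : (2:ℕ) ∣ 32) (ZMod 2)) v = 0 := by decide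

private lemma aux (K : ℤ)
    (hK : ∀ u v w : ZMod 32, w ^ 2 = (K : ZMod 32) * v ^ 6 - 4 * u ^ 6 →
      (ZMod.castHom (by norm_num : (2:ℕ) ∣ 32) (ZMod 2)) u = 0 ∧
      (ZMod.castHom (by norm_num : (2:ℕ) ∣ 32) (ZMod 2)) v = 0) :
    ¬ ∃ x y : ℚ, y ^ 2 = -4 * x ^ 6 + (K : ℚ) := by
  rintro ⟨x, y, h⟩
  set a : ℤ := x.num with ha
  set c : ℕ := x.den with hc
  have hxd : x * (c : ℚ) = (a : ℚ) := Rat.mul_den_eq_num x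
  set z : ℚ := y * (c : ℚ) ^ 3 with hz
  have key : z ^ 2 = ((K * (c : ℤ) ^ 6 - 4 * a ^ 6 : ℤ) : ℚ) := by
    push_cast
    linear_combination ((c : ℚ) ^ 6) * h -
      4 * ((x * c) ^ 5 + (x * c) ^ 4 * a + (x * c) ^ 3 * a ^ 2 + (x * c) ^ 2 * a ^ 3
        + (x * c) * a ^ 4 + (a : ℚ) ^ 5) * hxd
  have hzden : z.den = 1 := by
    have h1 : (z ^ 2).den = 1 := by rw [key]; exact Rat.den_intCast _
    have h2 : (z ^ 2).den = z.den ^ 2 := Rat.den_pow z 2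
    have h3 : z.den ^ 2 = 1 := by rw [← h2, h1]
    exact Nat.eq_one_of_dvd_one (h3 ▸ dvd_pow_self z.den two_ne_zero)
  set b : ℤ := z.num with hb
  have hzb : (b : ℚ) = z := (Rat.den_eq_one_iff z).mp hzden
  have hint : b ^ 2 = K * (c : ℤ) ^ 6 - 4 * a ^ 6 := by
    have : ((b ^ 2 : ℤ) : ℚ) = ((K * (c : ℤ) ^ 6 - 4 * a ^ 6 : ℤ) : ℚ) := by
      push_cast [hzb]
      push_cast at key
      linarith [key]
    exact_mod_cast this
  have hmod : ((b : ZMod 32)) ^ 2 = (K : ZMod 32) * ((c : ℤ) : ZMod 32) ^ 6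
      - 4 * ((a : ZMod 32)) ^ 6 := by
    have := congrArg (fun n : ℤ => (n : ZMod 32)) hint
    push_cast at this
    push_cast
    linear_combination this
  obtain ⟨hu, hv⟩ := hK (a : ZMod 32) ((c : ℤ) : ZMod 32) (b : ZMod 32) hmod
  have φa : ((a : ℤ) : ZMod 2) = 0 := by
    rw [← map_intCast (ZMod.castHom (by norm_num : (2:ℕ) ∣ 32) (ZMod 2)) a]; exact hu
  have φc : (((c : ℤ) : ℤ) : ZMod 2) = 0 := by
    rw [← map_intCast (ZMod.castHom (by norm_num : (2:ℕ) ∣ 32) (ZMod 2)) (c : ℤ)]; exact hv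
  have h2a : (2 : ℤ) ∣ a := by
    have := (ZMod.intCast_zmod_eq_zero_iff_dvd a 2).mp φa
    exact_mod_cast this
  have h2c : (2 : ℤ) ∣ (c : ℤ) := by
    have := (ZMod.intCast_zmod_eq_zero_iff_dvd (c : ℤ) 2).mp φc
    exact_mod_cast this
  have hcop : Nat.Coprime a.natAbs c := x.reduced
  have h2an : 2 ∣ a.natAbs := by
    have : (2 : ℤ).natAbs ∣ a.natAbs := Int.natAbs_dvd_natAbs.mpr h2a
    simpa using this
  have h2cn : 2 ∣ c := by exact_mod_cast h2c
  have : 2 ∣ Nat.gcd a.natAbs c := Nat.dvd_gcd h2an h2cn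
  rw [hcop] at this
  omega

/-- For `d = 3` and `d = 6`, the curve `C_d : y² = −4x⁶ + d³` has no rational points. -/
theorem no_rational_points_on_twists_d_eq_three_and_six :
    (¬ ∃ x y : ℚ, y ^ 2 = -4 * x ^ 6 + 27) ∧
    (¬ ∃ x y : ℚ, y ^ 2 = -4 * x ^ 6 + 216) := by
  constructor
  · have := aux 27 (by intro u v w hw; exact zmod_27 u v w (by push_cast at hw ⊢; exact hw))
    simpa using this
  · have := aux 216 (by intro u v w hw; exact zmod_216 u v w (by push_cast at hw ⊢; exact hw))
    simpa using this
end

section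
/- Let L = ℚ(√2). The quadratic twist of X₀(34) over ℚ(√3), given by the plane model x⁴ − 9y⁴ + x³ + 9xy² − 2x² + x + 1 = 0, has no L-rational points; that is, there are no x, y ∈ L with x⁴ − 9y⁴ + x³ + 9xy² − 2x² + x + 1 = 0. -/
/-- `L = ℚ(√2)`, the real quadratic field, as a subfield of `ℝ`. -/
noncomputable def L : IntermediateField ℚ ℝ :=
  IntermediateField.adjoin ℚ ({Real.sqrt 2} : Set ℝ)

lemma sqrt2_sq : Real.sqrt 2 ^ 2 = 2 := Real.sq_sqrt (by norm_num)

lemma sqrt2_ne_rat (r : ℚ) : (r : ℝ) ≠ Real.sqrt 2 := fun h =>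
  irrational_sqrt_two ⟨r, h⟩

/-- The subfield `ℚ + ℚ√2` of `ℝ`. -/
noncomputable def S : Subfield ℝ where
  carrier := {r : ℝ | ∃ a b : ℚ, r = a + b * Real.sqrt 2}
  zero_mem' := ⟨0, 0, by push_cast; ring⟩
  one_mem' := ⟨1, 0, by push_cast; ring⟩
  add_mem' := by
    rintro x y ⟨a, b, rfl⟩ ⟨c, d, rfl⟩
    exact ⟨a + c, b + d, by push_cast; ring⟩
  neg_mem' := by
    rintro x ⟨a, b, rfl⟩
    exact ⟨-a, -b, by push_cast; ring⟩
  mul_mem' := by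
    rintro x y ⟨a, b, rfl⟩ ⟨c, d, rfl⟩
    refine ⟨a*c + 2*b*d, a*d + b*c, ?_⟩
    push_cast
    linear_combination (b*d : ℝ) * sqrt2_sq
  inv_mem' := by
    intro x hx
    obtain ⟨a, b, rfl⟩ := hx
    by_cases hx0 : ((a : ℝ) + b * Real.sqrt 2) = 0
    · rw [hx0, inv_zero]; exact ⟨0, 0, by push_cast; ring⟩
    · have hn : (a^2 - 2*b^2 : ℚ) ≠ 0 := by
        intro h
        by_cases hb : b = 0
        · subst hb
          have ha : a = 0 := by
            have h2 : a^2 = 0 := by nlinarith [h]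
            exact pow_eq_zero_iff (by norm_num) |>.mp h2
          apply hx0; rw [ha]; push_cast; ring
        · apply sqrt2_ne_rat |a/b|
          have h2 : ((|a/b| : ℚ) : ℝ)^2 = 2 := by
            push_cast
            rw [abs_div, div_pow, sq_abs, sq_abs]
            have hb' : (b:ℝ) ≠ 0 := by exact_mod_cast hb
            field_simp
            exact_mod_cast (by linarith : (a^2 : ℚ) = b^2 * 2)
          rw [← h2, Real.sqrt_sq (by positivity)]
      have hn' : ((a:ℝ))^2 - 2*(b:ℝ)^2 ≠ 0 := by
        intro h; apply hn; exact_mod_cast h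
      refine ⟨a / (a^2 - 2*b^2), -b / (a^2 - 2*b^2), ?_⟩
      have hmul : ((a : ℝ) + b * Real.sqrt 2) *
          (((a / (a^2 - 2*b^2) : ℚ) : ℝ) + ((-b / (a^2 - 2*b^2) : ℚ) : ℝ) * Real.sqrt 2) = 1 := by
        push_cast
        linear_combination (mul_inv_cancel₀ hn') - ((b:ℝ)^2 * ((a:ℝ)^2 - 2*(b:ℝ)^2)⁻¹) * sqrt2_sq
      exact inv_eq_of_mul_eq_one_right hmul

lemma mem_L (r : ℝ) (hr : r ∈ L) : ∃ a b : ℚ, r = a + b * Real.sqrt 2 := by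
  have hL : L ≤ Subfield.toIntermediateField S
      (fun x => ⟨x, 0, by rw [eq_ratCast (algebraMap ℚ ℝ) x]; push_cast; ring⟩) := by
    rw [L, IntermediateField.adjoin_le_iff]
    rintro y hy
    rw [Set.mem_singleton_iff] at hy
    exact ⟨0, 1, by rw [hy]; push_cast; ring⟩
  exact hL hr

/-- Mod 3 analysis, stage 1: `A ≡ B ≡ N ≡ 0 (mod 3)`. -/
lemma stage1 : ∀ A B C D N : ZMod 3,
    A^4 + A^3*N + 12*A^2*B^2 - 2*A^2*N^2 + 6*A*B^2*N + 9*A*C^2*N + 18*A*D^2*N + A*N^3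
      + 4*B^4 - 4*B^2*N^2 + 36*B*C*D*N - 9*C^4 - 108*C^2*D^2 - 36*D^4 + N^4 = 0 →
    4*A^3*B + 3*A^2*B*N + 8*A*B^3 - 4*A*B*N^2 + 18*A*C*D*N + 2*B^3*N + 9*B*C^2*N
      + 18*B*D^2*N + B*N^3 - 36*C^3*D - 72*C*D^3 = 0 →
    A = 0 ∧ B = 0 ∧ N = 0 := by decide

/-- Mod 3 analysis, stage 2: `C ≡ D ≡ 0 (mod 3)`. -/
lemma stage2 : ∀ C D R : ZMod 3, C^4 + 12*C^2*D^2 + 4*D^4 = 9*R → C = 0 ∧ D = 0 := by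
  decide

/-- Infinite descent at 3 for the pair of homogeneous component equations. -/
lemma descent : ∀ k : ℕ, ∀ A B C D N : ℤ, N.natAbs ≤ k →
    A^4 + A^3*N + 12*A^2*B^2 - 2*A^2*N^2 + 6*A*B^2*N + 9*A*C^2*N + 18*A*D^2*N + A*N^3
      + 4*B^4 - 4*B^2*N^2 + 36*B*C*D*N - 9*C^4 - 108*C^2*D^2 - 36*D^4 + N^4 = 0 →
    4*A^3*B + 3*A^2*B*N + 8*A*B^3 - 4*A*B*N^2 + 18*A*C*D*N + 2*B^3*N + 9*B*C^2*N
      + 18*B*D^2*N + B*N^3 - 36*C^3*D - 72*C*D^3 = 0 →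
    N = 0 := by
  intro k
  induction k with
  | zero => intro A B C D N h _ _; omega
  | succ k ih =>
    intro A B C D N hle hP hQ
    have hP3 := congrArg (fun z : ℤ => (z : ZMod 3)) hP
    have hQ3 := congrArg (fun z : ℤ => (z : ZMod 3)) hQ
    push_cast at hP3 hQ3
    obtain ⟨h1, h2, h3⟩ := stage1 (A : ZMod 3) (B : ZMod 3) (C : ZMod 3) (D : ZMod 3)
      (N : ZMod 3) (by linear_combination hP3) (by linear_combination hQ3)
    rw [ZMod.intCast_zmod_eq_zero_iff_dvd] at h1 h2 h3
    have h1' : (3:ℤ) ∣ A := by exact_mod_cast h1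
    have h2' : (3:ℤ) ∣ B := by exact_mod_cast h2
    have h3' : (3:ℤ) ∣ N := by exact_mod_cast h3
    obtain ⟨a, rfl⟩ := h1'
    obtain ⟨b, rfl⟩ := h2'
    obtain ⟨n, rfl⟩ := h3'
    -- stage 2: C, D divisible by 3
    have hT : C^4 + 12*C^2*D^2 + 4*D^4 =
        9*(a^4 + a^3*n + 12*a^2*b^2 - 2*a^2*n^2 + 6*a*b^2*n + a*C^2*n + 2*a*D^2*n + a*n^3
           + 4*b^4 - 4*b^2*n^2 + 4*b*C*D*n + n^4) := by
      apply mul_left_cancel₀ (show (9:ℤ) ≠ 0 by norm_num)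
      linear_combination -hP
    have hT3 := congrArg (fun z : ℤ => (z : ZMod 3)) hT
    push_cast at hT3
    obtain ⟨h4, h5⟩ := stage2 (C : ZMod 3) (D : ZMod 3)
      ((a:ZMod 3)^4 + (a:ZMod 3)^3*(n:ZMod 3) + 12*(a:ZMod 3)^2*(b:ZMod 3)^2
        - 2*(a:ZMod 3)^2*(n:ZMod 3)^2 + 6*(a:ZMod 3)*(b:ZMod 3)^2*(n:ZMod 3)
        + (a:ZMod 3)*(C:ZMod 3)^2*(n:ZMod 3) + 2*(a:ZMod 3)*(D:ZMod 3)^2*(n:ZMod 3)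
        + (a:ZMod 3)*(n:ZMod 3)^3 + 4*(b:ZMod 3)^4 - 4*(b:ZMod 3)^2*(n:ZMod 3)^2
        + 4*(b:ZMod 3)*(C:ZMod 3)*(D:ZMod 3)*(n:ZMod 3) + (n:ZMod 3)^4)
      (by linear_combination hT3)
    rw [ZMod.intCast_zmod_eq_zero_iff_dvd] at h4 h5
    have h4' : (3:ℤ) ∣ C := by exact_mod_cast h4
    have h5' : (3:ℤ) ∣ D := by exact_mod_cast h5
    obtain ⟨c, rfl⟩ := h4'
    obtain ⟨d, rfl⟩ := h5'
    -- divide both equations by 81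
    have hP' : a^4 + a^3*n + 12*a^2*b^2 - 2*a^2*n^2 + 6*a*b^2*n + 9*a*c^2*n + 18*a*d^2*n
        + a*n^3 + 4*b^4 - 4*b^2*n^2 + 36*b*c*d*n - 9*c^4 - 108*c^2*d^2 - 36*d^4 + n^4 = 0 := by
      apply mul_left_cancel₀ (show (81:ℤ) ≠ 0 by norm_num)
      linear_combination hP
    have hQ' : 4*a^3*b + 3*a^2*b*n + 8*a*b^3 - 4*a*b*n^2 + 18*a*c*d*n + 2*b^3*n + 9*b*c^2*n
        + 18*b*d^2*n + b*n^3 - 36*c^3*d - 72*c*d^3 = 0 := by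
      apply mul_left_cancel₀ (show (81:ℤ) ≠ 0 by norm_num)
      linear_combination hQ
    have hlt : n.natAbs ≤ k := by
      rw [Int.natAbs_mul] at hle
      norm_num at hle
      omega
    have := ih a b c d n hlt hP' hQ'
    simp [this]

/-- The quadratic twist of `X₀(34)` over `ℚ(√3)`, given by the plane model
`x⁴ − 9y⁴ + x³ + 9xy² − 2x² + x + 1 = 0`, has no `L`-rational points,
where `L = ℚ(√2)`. -/
theorem twist_X0_34_has_no_QSqrt2_points :
    ¬ ∃ x y : ℝ, x ∈ L ∧ y ∈ L ∧
      x ^ 4 - 9 * y ^ 4 + x ^ 3 + 9 * x * y ^ 2 - 2 * x ^ 2 + x + 1 = 0 := by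
  rintro ⟨x, y, hx, hy, heq⟩
  obtain ⟨a, b, rfl⟩ := mem_L x hx
  obtain ⟨c, d, rfl⟩ := mem_L y hy
  -- separate the rational and √2 components
  have hsep : ((a^4 + a^3 + 12*a^2*b^2 - 2*a^2 + 6*a*b^2 + 9*a*c^2 + 18*a*d^2 + a + 4*b^4
        - 4*b^2 + 36*b*c*d - 9*c^4 - 108*c^2*d^2 - 36*d^4 + 1 : ℚ) : ℝ)
      + ((4*a^3*b + 3*a^2*b + 8*a*b^3 - 4*a*b + 18*a*c*d + 2*b^3 + 9*b*c^2 + 18*b*d^2 + b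
        - 36*c^3*d - 72*c*d^3 : ℚ) : ℝ) * Real.sqrt 2 = 0 := by
    push_cast
    linear_combination heq - (6*(a:ℝ)^2*(b:ℝ)^2 + 4*(a:ℝ)*(b:ℝ)^3*Real.sqrt 2
      + 3*(a:ℝ)*(b:ℝ)^2 + 9*(a:ℝ)*(d:ℝ)^2 + (b:ℝ)^4*Real.sqrt 2^2 + 2*(b:ℝ)^4
      + (b:ℝ)^3*Real.sqrt 2 - 2*(b:ℝ)^2 + 18*(b:ℝ)*(c:ℝ)*(d:ℝ) + 9*(b:ℝ)*(d:ℝ)^2*Real.sqrt 2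
      - 54*(c:ℝ)^2*(d:ℝ)^2 - 36*(c:ℝ)*(d:ℝ)^3*Real.sqrt 2 - 9*(d:ℝ)^4*Real.sqrt 2^2
      - 18*(d:ℝ)^4) * sqrt2_sq
  set p : ℚ := a^4 + a^3 + 12*a^2*b^2 - 2*a^2 + 6*a*b^2 + 9*a*c^2 + 18*a*d^2 + a + 4*b^4
      - 4*b^2 + 36*b*c*d - 9*c^4 - 108*c^2*d^2 - 36*d^4 + 1 with hp_def
  set q : ℚ := 4*a^3*b + 3*a^2*b + 8*a*b^3 - 4*a*b + 18*a*c*d + 2*b^3 + 9*b*c^2 + 18*b*d^2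
      + b - 36*c^3*d - 72*c*d^3 with hq_def
  have hq0 : q = 0 := by
    by_contra hq0
    apply sqrt2_ne_rat (-p/q)
    have hq0' : (q:ℝ) ≠ 0 := by exact_mod_cast hq0
    push_cast
    rw [div_eq_iff hq0']
    linear_combination -hsep
  have hp0 : p = 0 := by
    have : (p:ℝ) = 0 := by rw [hq0] at hsep; push_cast at hsep; linarith
    exact_mod_cast this
  rw [hp_def] at hp0
  rw [hq_def] at hq0
  -- clear denominators
  have hnum : ∀ r : ℚ, (r.num : ℚ) = r * r.den := fun r =>
    (div_eq_iff (by exact_mod_cast r.den_nz : ((r.den:ℚ)) ≠ 0)).mp (Rat.num_div_den r)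
  set A : ℤ := a.num * ((b.den : ℤ) * (c.den : ℤ) * (d.den : ℤ)) with hA_def
  set B : ℤ := b.num * ((a.den : ℤ) * (c.den : ℤ) * (d.den : ℤ)) with hB_def
  set C : ℤ := c.num * ((a.den : ℤ) * (b.den : ℤ) * (d.den : ℤ)) with hC_def
  set D : ℤ := d.num * ((a.den : ℤ) * (b.den : ℤ) * (c.den : ℤ)) with hD_def
  set N : ℤ := (a.den : ℤ) * (b.den : ℤ) * (c.den : ℤ) * (d.den : ℤ) with hN_def
  have hNpos : 0 < N := by
    rw [hN_def]
    positivity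
  have hA : (A:ℚ) = a * N := by rw [hA_def, hN_def]; push_cast [hnum a]; ring
  have hB : (B:ℚ) = b * N := by rw [hB_def, hN_def]; push_cast [hnum b]; ring
  have hC : (C:ℚ) = c * N := by rw [hC_def, hN_def]; push_cast [hnum c]; ring
  have hD : (D:ℚ) = d * N := by rw [hD_def, hN_def]; push_cast [hnum d]; ring
  clear_value A B C D N
  have hPZ : A^4 + A^3*N + 12*A^2*B^2 - 2*A^2*N^2 + 6*A*B^2*N + 9*A*C^2*N + 18*A*D^2*N
      + A*N^3 + 4*B^4 - 4*B^2*N^2 + 36*B*C*D*N - 9*C^4 - 108*C^2*D^2 - 36*D^4 + N^4 = 0 := by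
    have : ((A^4 + A^3*N + 12*A^2*B^2 - 2*A^2*N^2 + 6*A*B^2*N + 9*A*C^2*N + 18*A*D^2*N
        + A*N^3 + 4*B^4 - 4*B^2*N^2 + 36*B*C*D*N - 9*C^4 - 108*C^2*D^2 - 36*D^4 + N^4 : ℤ) : ℚ)
        = 0 := by
      push_cast
      rw [hA, hB, hC, hD]
      linear_combination ((N:ℚ))^4 * hp0
    exact_mod_cast this
  have hQZ : 4*A^3*B + 3*A^2*B*N + 8*A*B^3 - 4*A*B*N^2 + 18*A*C*D*N + 2*B^3*N + 9*B*C^2*N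
      + 18*B*D^2*N + B*N^3 - 36*C^3*D - 72*C*D^3 = 0 := by
    have : ((4*A^3*B + 3*A^2*B*N + 8*A*B^3 - 4*A*B*N^2 + 18*A*C*D*N + 2*B^3*N + 9*B*C^2*N
        + 18*B*D^2*N + B*N^3 - 36*C^3*D - 72*C*D^3 : ℤ) : ℚ) = 0 := by
      push_cast
      rw [hA, hB, hC, hD]
      linear_combination ((N:ℚ))^4 * hq0
    exact_mod_cast this
  have := descent N.natAbs A B C D N le_rfl hPZ hQZ
  omega
end
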